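/- arXiv:2409.01155 — 2 statements merged into one kernel-verified Lean document; each statement's English description precedes it below -/
import Mathlib

section
/- Let μ be a Borel measure on ℝ with 0 < μ(I) < ∞ for every dyadic interval I. If μ is sibling balanced, then μ is m-increasing; quantitatively, m(I) ≤ 2·[μ]_sib·m(Î) for every I ∈ 𝒟. -/
open MeasureTheory Set

noncomputable section

namespace Dyadic

/-- The dyadic interval `[2^{-k} n, 2^{-k}(n+1))`, indexed by `I = (k, n) : ℤ × ℤ`. -/
def dint (I : ℤ × ℤ) : Set ℝ :=
  Set.Ico ((2:ℝ) ^ (-I.1) * (I.2 : ℝ)) ((2:ℝ) ^ (-I.1) * ((I.2 : ℝ) + 1))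

/-- The left (`r = false`) and right (`r = true`) dyadic children of `I`. -/
def ch (I : ℤ × ℤ) (r : Bool) : ℤ × ℤ := (I.1 + 1, 2 * I.2 + if r then 1 else 0)

/-- The dyadic parent `Î` of `I` (using Euclidean division, i.e. floor division). -/
def pa (I : ℤ × ℤ) : ℤ × ℤ := (I.1 - 1, I.2 / 2)

/-- The dyadic sibling `I^s` of `I` (the other child of the parent). -/
def sib (I : ℤ × ℤ) : ℤ × ℤ := (I.1, if I.2 % 2 = 0 then I.2 + 1 else I.2 - 1)

/-- `μ(I)` as a real number. -/
def muR (μ : Measure ℝ) (I : ℤ × ℤ) : ℝ := (μ (dint I)).toReal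

/-- `m(I) = μ(I₋)·μ(I₊)/μ(I)`. -/
def mQ (μ : Measure ℝ) (I : ℤ × ℤ) : ℝ :=
  muR μ (ch I false) * muR μ (ch I true) / muR μ I

/-- `0 < μ(I) < ∞` for every dyadic interval `I`. -/
def GoodMeasure (μ : Measure ℝ) : Prop :=
  ∀ I : ℤ × ℤ, 0 < μ (dint I) ∧ μ (dint I) < ⊤

/-- `μ` is sibling balanced with constant `K`, i.e. `[μ]_sib ≤ K`. -/
def SibBalanced (μ : Measure ℝ) (K : ℝ) : Prop :=
  ∀ I : ℤ × ℤ, mQ μ I ≤ K * mQ μ (sib I)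

/-- `μ` is balanced with constant `C`: `C⁻¹·m(Î) ≤ m(I) ≤ C·m(Î)` for all `I`. -/
def Balanced (μ : Measure ℝ) (C : ℝ) : Prop :=
  ∀ I : ℤ × ℤ, mQ μ (pa I) ≤ C * mQ μ I ∧ mQ μ I ≤ C * mQ μ (pa I)

/-- The μ-average `⟨f⟩_I` of `f` over the dyadic interval `I`. -/
def avg (μ : Measure ℝ) (I : ℤ × ℤ) (f : ℝ → ℝ) : ℝ :=
  (muR μ I)⁻¹ * ∫ x in dint I, f x ∂μ

/-- The Haar function `h_I = √(m(I)) (1_{I₋}/μ(I₋) − 1_{I₊}/μ(I₊))`. -/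
def haar (μ : Measure ℝ) (I : ℤ × ℤ) : ℝ → ℝ := fun x =>
  Real.sqrt (mQ μ I) *
    ((dint (ch I false)).indicator (fun _ => (muR μ (ch I false))⁻¹) x -
      (dint (ch I true)).indicator (fun _ => (muR μ (ch I true))⁻¹) x)

/-- The pairing `⟨f, g⟩ = ∫ f g dμ`. -/
def pairing (μ : Measure ℝ) (f g : ℝ → ℝ) : ℝ := ∫ x, f x * g x ∂μ

/-- The dyadic Hilbert transform
`ℋf = Σ_{I∈𝒟} (⟨f,h_{I₊}⟩h_{I₋} − ⟨f,h_{I₋}⟩h_{I₊})`. -/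
def Hop (μ : Measure ℝ) (f : ℝ → ℝ) : ℝ → ℝ := fun x =>
  ∑' I : ℤ × ℤ,
    (pairing μ f (haar μ (ch I true)) * haar μ (ch I false) x -
      pairing μ f (haar μ (ch I false)) * haar μ (ch I true) x)

/-- The BMO quotient `μ(I)⁻¹ ∫_I |b − ⟨b⟩_{Î}| dμ`. -/
def bmoQuot (μ : Measure ℝ) (b : ℝ → ℝ) (I : ℤ × ℤ) : ℝ :=
  (muR μ I)⁻¹ * ∫ x in dint I, |b x - avg μ (pa I) b| ∂μ

/-- The martingale BMO norm `‖b‖_{BMO(μ)} = sup_{I∈𝒟} μ(I)⁻¹ ∫_I |b − ⟨b⟩_{Î}| dμ`. -/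
def bmoNorm (μ : Measure ℝ) (b : ℝ → ℝ) : ℝ := ⨆ I : ℤ × ℤ, bmoQuot μ b I

/-- Membership in martingale BMO: locally integrable with finite BMO norm. -/
def MemBMO (μ : Measure ℝ) (b : ℝ → ℝ) : Prop :=
  LocallyIntegrable b μ ∧ BddAbove (Set.range (bmoQuot μ b))

/-- The conditional expectation `𝖤_k b = Σ_{I ∈ 𝒟_k} ⟨b⟩_I 1_I`. -/
def condExp (μ : Measure ℝ) (k : ℤ) (b : ℝ → ℝ) : ℝ → ℝ := fun x =>
  ∑' n : ℤ, (dint (k, n)).indicator (fun _ => avg μ (k, n) b) x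

/-- Bounded, compactly supported, measurable function. -/
def BCS (f : ℝ → ℝ) : Prop :=
  Measurable f ∧ (∃ M : ℝ, ∀ x, |f x| ≤ M) ∧ HasCompactSupport f

/-- The dual weight `σ = ω^{−1/(p−1)}`. -/
def dual (p : ℝ) (ω : ℝ → ℝ) : ℝ → ℝ := fun x => ω x ^ (-(1:ℝ) / (p - 1))

/-- A weight: μ-a.e. positive and locally μ-integrable. -/
def IsWeight (μ : Measure ℝ) (ω : ℝ → ℝ) : Prop :=
  (∀ᵐ x ∂μ, 0 < ω x) ∧ LocallyIntegrable ω μ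

/-- `[ω]_{Â_p(μ)} ≤ K`: over all pairs `I, J` with `J ∈ {I, Î}` or `I ∈ {J, Ĵ}`. -/
def AhatLE (μ : Measure ℝ) (p : ℝ) (ω : ℝ → ℝ) (K : ℝ) : Prop :=
  ∀ I J : ℤ × ℤ, (J = I ∨ J = pa I ∨ I = pa J) →
    avg μ I ω * (avg μ J (dual p ω)) ^ (p - 1) ≤ K

/-- `[ω]_{A_p(μ)} ≤ K`. -/
def ApLE (μ : Measure ℝ) (p : ℝ) (ω : ℝ → ℝ) (K : ℝ) : Prop :=
  ∀ I : ℤ × ℤ, avg μ I ω * (avg μ I (dual p ω)) ^ (p - 1) ≤ K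

/-- The coefficients `c_p(I, J)` of the class `A_p^{sib}(μ)`. -/
def cSib (μ : Measure ℝ) (p : ℝ) (I J : ℤ × ℤ) : ℝ :=
  if I = J then 1
  else if pa I = sib (pa J) then
    (mQ μ (pa I) / muR μ I) ^ (p - 1) * (mQ μ (pa J) / muR μ J)
  else if J = sib (pa I) then
    (mQ μ (pa I) / muR μ I) ^ (p - 1) * (mQ μ J / muR μ J)
  else if I = sib (pa J) then
    (mQ μ I / muR μ I) ^ (p - 1) * (mQ μ (pa J) / muR μ J)
  else 0

/-- `[ω]_{A_p^{sib}(μ)} ≤ K`. -/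
def ApSibLE (μ : Measure ℝ) (p : ℝ) (ω : ℝ → ℝ) (K : ℝ) : Prop :=
  ∀ I J : ℤ × ℤ, cSib μ p I J * (avg μ I ω * (avg μ J (dual p ω)) ^ (p - 1)) ≤ K

/-- `[ω]_{A_p^{bal}(μ)} ≤ K`: over all pairs `I, J` with `I = J`, or `J` a child of
`I^s`, or `I` a child of `J^s`. -/
def ApBalLE (μ : Measure ℝ) (p : ℝ) (ω : ℝ → ℝ) (K : ℝ) : Prop :=
  ∀ I J : ℤ × ℤ, (I = J ∨ pa J = sib I ∨ pa I = sib J) →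
    mQ μ I ^ (p / 2) * mQ μ J ^ (p / 2) / (muR μ I ^ (p - 1) * muR μ J) *
      (avg μ I ω * (avg μ J (dual p ω)) ^ (p - 1)) ≤ K

/-- An η-sparse family of dyadic intervals. -/
def IsSparse (μ : Measure ℝ) (η : ℝ) (S : Set (ℤ × ℤ)) : Prop :=
  ∃ E : ℤ × ℤ → Set ℝ,
    (∀ I ∈ S, MeasurableSet (E I) ∧ E I ⊆ dint I ∧
      ENNReal.ofReal η * μ (dint I) ≤ μ (E I)) ∧ S.PairwiseDisjoint E

/-- `𝒜_𝒮(f₁,f₂) = Σ_{I∈𝒮} ⟨f₁⟩_I ⟨f₂⟩_I μ(I)`. -/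
def formA (μ : Measure ℝ) (S : Set (ℤ × ℤ)) (f₁ f₂ : ℝ → ℝ) : ℝ :=
  ∑' I : S, avg μ (I : ℤ × ℤ) f₁ * avg μ (I : ℤ × ℤ) f₂ * muR μ (I : ℤ × ℤ)

/-- `ℰ₁^𝒮(f₁,f₂) = Σ_{I,J∈𝒮, Î=(Ĵ)^s} ⟨f₁⟩_I ⟨f₂⟩_J m(Î)^{1/2} m(Ĵ)^{1/2}`. -/
def formE1 (μ : Measure ℝ) (S : Set (ℤ × ℤ)) (f₁ f₂ : ℝ → ℝ) : ℝ :=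
  ∑' q : {q : (ℤ × ℤ) × (ℤ × ℤ) // q.1 ∈ S ∧ q.2 ∈ S ∧ pa q.1 = sib (pa q.2)},
    avg μ (q : (ℤ × ℤ) × (ℤ × ℤ)).1 f₁ * avg μ (q : (ℤ × ℤ) × (ℤ × ℤ)).2 f₂ *
      Real.sqrt (mQ μ (pa (q : (ℤ × ℤ) × (ℤ × ℤ)).1)) *
      Real.sqrt (mQ μ (pa (q : (ℤ × ℤ) × (ℤ × ℤ)).2))

/-- `ℰ₂^𝒮(f₁,f₂) = Σ_{I,J∈𝒮, I=(Ĵ)^s} ⟨f₁⟩_I ⟨f₂⟩_J m(I)^{1/2} m(Ĵ)^{1/2}`. -/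
def formE2 (μ : Measure ℝ) (S : Set (ℤ × ℤ)) (f₁ f₂ : ℝ → ℝ) : ℝ :=
  ∑' q : {q : (ℤ × ℤ) × (ℤ × ℤ) // q.1 ∈ S ∧ q.2 ∈ S ∧ q.1 = sib (pa q.2)},
    avg μ (q : (ℤ × ℤ) × (ℤ × ℤ)).1 f₁ * avg μ (q : (ℤ × ℤ) × (ℤ × ℤ)).2 f₂ *
      Real.sqrt (mQ μ (q : (ℤ × ℤ) × (ℤ × ℤ)).1) *
      Real.sqrt (mQ μ (pa (q : (ℤ × ℤ) × (ℤ × ℤ)).2))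

/-- `ℰ₃^𝒮(f₁,f₂) = Σ_{I,J∈𝒮, J=(Î)^s} ⟨f₁⟩_I ⟨f₂⟩_J m(Î)^{1/2} m(J)^{1/2}`. -/
def formE3 (μ : Measure ℝ) (S : Set (ℤ × ℤ)) (f₁ f₂ : ℝ → ℝ) : ℝ :=
  ∑' q : {q : (ℤ × ℤ) × (ℤ × ℤ) // q.1 ∈ S ∧ q.2 ∈ S ∧ q.2 = sib (pa q.1)},
    avg μ (q : (ℤ × ℤ) × (ℤ × ℤ)).1 f₁ * avg μ (q : (ℤ × ℤ) × (ℤ × ℤ)).2 f₂ *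
      Real.sqrt (mQ μ (pa (q : (ℤ × ℤ) × (ℤ × ℤ)).1)) *
      Real.sqrt (mQ μ (q : (ℤ × ℤ) × (ℤ × ℤ)).2)

/-- The measure `μ_k = Σ_{ℓ∈ℤ} δ_ℓ + 2^{−k}·(Lebesgue restricted to ℝ∖ℤ)`. -/
def muK (k : ℕ) : Measure ℝ :=
  Measure.sum (fun ℓ : ℤ => Measure.dirac (ℓ : ℝ)) +
    ENNReal.ofReal ((2:ℝ) ^ (-(k:ℤ))) •
      volume.restrict ((Set.range (fun n : ℤ => (n : ℝ)))ᶜ)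

open Classical in
/-- The function `b_k`: equal to `1` on ℤ and `2^k` off ℤ. -/
def bK (k : ℕ) : ℝ → ℝ := fun x =>
  if ∃ n : ℤ, (n : ℝ) = x then 1 else (2:ℝ) ^ k


lemma dint_ch_false (I : ℤ × ℤ) : dint (ch I false)
    = Set.Ico ((2:ℝ)^(-(I.1+1)) * (2*(I.2:ℝ))) ((2:ℝ)^(-(I.1+1)) * (2*(I.2:ℝ)+1)) := by
  simp only [dint, ch]
  congr 1 <;> push_cast <;> ring

lemma dint_ch_true (I : ℤ × ℤ) : dint (ch I true)
    = Set.Ico ((2:ℝ)^(-(I.1+1)) * (2*(I.2:ℝ)+1)) ((2:ℝ)^(-(I.1+1)) * (2*(I.2:ℝ)+2)) := by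
  simp only [dint, ch]
  congr 1 <;> push_cast <;> ring

lemma dint_eq' (I : ℤ × ℤ) :
    dint I = Set.Ico ((2:ℝ)^(-(I.1+1)) * (2*(I.2:ℝ)))
      ((2:ℝ)^(-(I.1+1)) * (2*(I.2:ℝ)+2)) := by
  have h : (2:ℝ)^(-I.1) = (2:ℝ)^(-(I.1+1)) * 2 := by
    rw [show -I.1 = (-(I.1+1)) + 1 by ring, zpow_add_one₀ (two_ne_zero)]
  simp only [dint, h]
  congr 1 <;> push_cast <;> ring

lemma dint_union (I : ℤ × ℤ) : dint (ch I false) ∪ dint (ch I true) = dint I := by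
  have hx : (0:ℝ) < (2:ℝ)^(-(I.1+1)) := by positivity
  rw [dint_ch_false, dint_ch_true, dint_eq',
    Set.Ico_union_Ico_eq_Ico (by nlinarith) (by nlinarith)]

lemma dint_disj (I : ℤ × ℤ) : Disjoint (dint (ch I false)) (dint (ch I true)) := by
  rw [dint_ch_false, dint_ch_true]
  exact Set.Ico_disjoint_Ico_same

lemma sib_sib (I : ℤ × ℤ) : sib (sib I) = I := by
  simp only [sib]
  rw [Prod.ext_iff]
  refine ⟨rfl, ?_⟩
  simp only
  split_ifs <;> omega

lemma pa_children (I : ℤ × ℤ) :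
    (ch (pa I) false = I ∧ ch (pa I) true = sib I) ∨
    (ch (pa I) false = sib I ∧ ch (pa I) true = I) := by
  rcases Int.emod_two_eq I.2 with h | h
  · left
    constructor <;> (simp only [ch, pa, sib, Prod.ext_iff]; constructor) <;> simp <;> omega
  · right
    constructor <;> (simp only [ch, pa, sib, Prod.ext_iff]; constructor) <;> simp <;> omega

lemma muR_split (μ : Measure ℝ) (hμ : GoodMeasure μ) (I : ℤ × ℤ) :
    muR μ I = muR μ (ch I false) + muR μ (ch I true) := by
  unfold muR
  rw [← dint_union I, measure_union (dint_disj I) measurableSet_Ico,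
    ENNReal.toReal_add (hμ _).2.ne (hμ _).2.ne]

/-- If `μ` is sibling balanced with constant `K = [μ]_sib`, then `μ` is
m-increasing: `m(I) ≤ 2·K·m(Î)` for every dyadic interval `I`. -/
theorem stmt0 (μ : Measure ℝ) (hμ : GoodMeasure μ) (K : ℝ) (hK : SibBalanced μ K)
    (I : ℤ × ℤ) : mQ μ I ≤ 2 * K * mQ μ (pa I) := by
  have pos : ∀ J, 0 < muR μ J := fun J => ENNReal.toReal_pos (hμ J).1.ne' (hμ J).2.ne
  have mpos : ∀ J, 0 < mQ μ J :=
    fun J => div_pos (mul_pos (pos _) (pos _)) (pos J)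
  have half : ∀ J, mQ μ J ≤ muR μ J / 2 := by
    intro J
    have hs := muR_split μ hμ J
    have h1 := pos (ch J false); have h2 := pos (ch J true)
    unfold mQ
    rw [hs, div_le_div_iff₀ (by linarith) two_pos]
    nlinarith [sq_nonneg (muR μ (ch J false) - muR μ (ch J true))]
  have hK1 : (1:ℝ) ≤ K := by
    have h1 := hK I
    have h2 := hK (sib I)
    rw [sib_sib] at h2
    nlinarith [mpos I, mpos (sib I)]
  have hsplit := muR_split μ hμ (pa I)
  have hcm : mQ μ (pa I) = muR μ I * muR μ (sib I) / muR μ (pa I) := by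
    obtain ⟨hf, ht⟩ | ⟨hf, ht⟩ := pa_children I <;>
      (unfold mQ; rw [hf, ht]) <;> ring
  have hps : muR μ (pa I) = muR μ I + muR μ (sib I) := by
    obtain ⟨hf, ht⟩ | ⟨hf, ht⟩ := pa_children I <;> rw [hsplit, hf, ht] <;> ring
  set x := muR μ I with hxd
  set y := muR μ (sib I) with hyd
  have hx := pos I; have hy := pos (sib I)
  rw [← hxd] at hx; rw [← hyd] at hy
  have ha := half I
  have hb := half (sib I)
  have hab := hK I
  have haKy : mQ μ I ≤ K * (y / 2) :=
    le_trans hab (mul_le_mul_of_nonneg_left hb (by linarith))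
  have hc : mQ μ (pa I) * (x + y) = x * y := by
    rw [hcm, hps]; field_simp
  nlinarith [mul_nonneg (sub_nonneg.mpr haKy) hx.le,
    mul_nonneg (sub_nonneg.mpr ha) hy.le, mul_pos hx hy,
    mpos (pa I), mul_pos (mul_pos hx hy) (mpos (pa I))]
end Dyadic
end
end

section
/- For every k ∈ ℕ with k ≥ 1, the measure μ_k and the function b_k satisfy: (1) μ_k is sibling balanced with [μ_k]_sib ≤ C for a universal constant C independent of k; (2) c·2^k ≤ sup_{I∈𝒟} |⟨b_k⟩_I − ⟨b_k⟩_{I^s}| ≤ C·2^k for universal constants c, C > 0 (averages taken with respect to μ_k); (3) sup_{I∈𝒟} (μ_k(I)⁻¹∫_I |b_k − ⟨b_k⟩_I|² dμ_k)^{1/2} ≤ C·2^{k/2} for a universal constant C. -/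
open MeasureTheory Set

noncomputable section

namespace Dyadic

section Aux

open Classical ENNReal

lemma meas_dint (I : ℤ × ℤ) : MeasurableSet (dint I) := measurableSet_Ico

lemma two_zpow_pos (j : ℤ) : (0:ℝ) < (2:ℝ) ^ j := zpow_pos (by norm_num) j

lemma vol_Zs : volume (Set.range (fun n : ℤ => (n : ℝ))) = 0 :=
  (Set.countable_range _).measure_zero _

lemma vol_restrict_compl :
    volume.restrict ((Set.range (fun n : ℤ => (n : ℝ)))ᶜ) = volume := by
  rw [Measure.restrict_congr_set (t := Set.univ), Measure.restrict_univ]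
  rw [ae_eq_univ, compl_compl]
  exact vol_Zs

lemma vol_dint (I : ℤ × ℤ) : volume (dint I) = ENNReal.ofReal ((2:ℝ) ^ (-I.1)) := by
  rw [dint, Real.volume_Ico]
  congr 1
  ring

/-- The dirac part of `μ_k` applied to `dint I`. -/
def DS (I : ℤ × ℤ) : ℝ≥0∞ :=
  Measure.sum (fun ℓ : ℤ => Measure.dirac ((ℓ : ℤ) : ℝ)) (dint I)

lemma DS_eq (I : ℤ × ℤ) :
    DS I = ∑' ℓ : ℤ, (dint I).indicator 1 ((ℓ : ℤ) : ℝ) := by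
  rw [DS, Measure.sum_apply _ (meas_dint I)]
  exact tsum_congr fun ℓ => Measure.dirac_apply' _ (meas_dint I)

/-- The left endpoint of `dint (j, n)` is an integer. -/
def PP (j n : ℤ) : Prop := ∃ ℓ : ℤ, (ℓ : ℝ) = (2:ℝ) ^ (-j) * n

lemma mem_small {j n : ℤ} (hj : 0 ≤ j) {ℓ : ℤ} :
    ((ℓ : ℝ) ∈ dint (j, n)) ↔ (ℓ : ℝ) = (2:ℝ) ^ (-j) * n := by
  have hc : (0:ℝ) < (2:ℝ) ^ j := two_zpow_pos j
  have e : (2:ℝ) ^ (-j) = ((2:ℝ) ^ j)⁻¹ := zpow_neg 2 j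
  simp only [dint, Set.mem_Ico]
  constructor
  · rintro ⟨h1, h2⟩
    lift j to ℕ using hj with t
    have hcast : ((2 ^ t * ℓ : ℤ) : ℝ) = (2:ℝ) ^ (t : ℤ) * ℓ := by
      push_cast [zpow_natCast]; ring
    have h1' : (n : ℝ) ≤ ((2 ^ t * ℓ : ℤ) : ℝ) := by
      have := mul_le_mul_of_nonneg_left h1 hc.le
      rw [e, ← _root_.mul_assoc, mul_inv_cancel₀ hc.ne', _root_.one_mul] at this
      rw [hcast]; exact this
    have h2' : ((2 ^ t * ℓ : ℤ) : ℝ) < (n : ℝ) + 1 := by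
      have := mul_lt_mul_of_pos_left h2 hc
      rw [e, ← _root_.mul_assoc, mul_inv_cancel₀ hc.ne', _root_.one_mul] at this
      rw [hcast]; linarith
    have h1'' : n ≤ 2 ^ t * ℓ := by exact_mod_cast h1'
    have h2'' : 2 ^ t * ℓ < n + 1 := by
      have : ((2 ^ t * ℓ : ℤ) : ℝ) < ((n + 1 : ℤ) : ℝ) := by push_cast; push_cast at h2'; linarith
      exact_mod_cast this
    have hmn : 2 ^ t * ℓ = n := by omega
    have hn : (n : ℝ) = (2:ℝ) ^ (t : ℤ) * ℓ := by rw [← hmn, ← hcast]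
    rw [hn, e, ← _root_.mul_assoc, inv_mul_cancel₀ hc.ne', _root_.one_mul]
  · intro hℓ
    constructor
    · exact hℓ.ge
    · rw [hℓ]
      have : (0:ℝ) < (2:ℝ) ^ (-j) := two_zpow_pos (-j)
      nlinarith

lemma DS_small {j n : ℤ} (hj : 0 ≤ j) : DS (j, n) = if PP j n then 1 else 0 := by
  rw [DS_eq]
  by_cases h : PP j n
  · obtain ⟨ℓ₀, hℓ₀⟩ := h
    rw [if_pos ⟨ℓ₀, hℓ₀⟩, tsum_eq_single ℓ₀]
    · rw [Set.indicator_of_mem ((mem_small hj).2 hℓ₀)]; rfl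
    · intro ℓ hne
      apply Set.indicator_of_notMem
      intro hmem
      exact hne (by exact_mod_cast ((mem_small hj).1 hmem).trans hℓ₀.symm)
  · rw [if_neg h]
    have : ∀ ℓ : ℤ, (dint (j, n)).indicator (1 : ℝ → ℝ≥0∞) ((ℓ : ℤ) : ℝ) = 0 := fun ℓ =>
      Set.indicator_of_notMem (fun hmem => h ⟨ℓ, (mem_small hj).1 hmem⟩) _
    simp [this]

lemma DS_big {j n : ℤ} (hj : j ≤ 0) : DS (j, n) = ENNReal.ofReal ((2:ℝ) ^ (-j)) := by
  obtain ⟨t, rfl⟩ : ∃ t : ℕ, j = -(t : ℤ) := ⟨(-j).toNat, by omega⟩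
  have hL : (2:ℝ) ^ (-(-(t:ℤ))) = ((2 ^ t : ℤ) : ℝ) := by
    rw [neg_neg]; push_cast [zpow_natCast]; ring
  have hmem : ∀ ℓ : ℤ, ((ℓ : ℝ) ∈ dint (-(t:ℤ), n)) ↔ ℓ ∈ Finset.Ico (2 ^ t * n) (2 ^ t * (n + 1)) := by
    intro ℓ
    simp only [dint, Set.mem_Ico, Finset.mem_Ico]
    rw [hL]
    constructor
    · rintro ⟨h1, h2⟩
      constructor
      · exact_mod_cast (by push_cast at h1 ⊢; linarith : ((2 ^ t * n : ℤ) : ℝ) ≤ (ℓ : ℝ))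
      · exact_mod_cast (by push_cast at h2 ⊢; linarith : (ℓ : ℝ) < ((2 ^ t * (n + 1) : ℤ) : ℝ))
    · rintro ⟨h1, h2⟩
      constructor
      · have : ((2 ^ t * n : ℤ) : ℝ) ≤ (ℓ : ℝ) := by exact_mod_cast h1
        push_cast at this ⊢; linarith
      · have : (ℓ : ℝ) < ((2 ^ t * (n + 1) : ℤ) : ℝ) := by exact_mod_cast h2
        push_cast at this ⊢; linarith
  rw [DS_eq, tsum_eq_sum (s := Finset.Ico (2 ^ t * n) (2 ^ t * (n + 1)))
    (fun ℓ hℓ => Set.indicator_of_notMem (fun hm => hℓ ((hmem ℓ).1 hm)) _)]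
  have hcard : (Finset.Ico (2 ^ t * n) (2 ^ t * (n + 1))).card = 2 ^ t := by
    rw [Int.card_Ico]
    have h : (2:ℤ) ^ t * (n + 1) - 2 ^ t * n = ((2 ^ t : ℕ) : ℤ) := by push_cast; ring
    rw [h, Int.toNat_natCast]
  calc ∑ ℓ ∈ Finset.Ico (2 ^ t * n) (2 ^ t * (n + 1)),
        (dint (-(t:ℤ), n)).indicator (1 : ℝ → ℝ≥0∞) ((ℓ : ℤ) : ℝ)
      = ∑ _ℓ ∈ Finset.Ico (2 ^ t * n) (2 ^ t * (n + 1)), (1 : ℝ≥0∞) :=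
        Finset.sum_congr rfl (fun ℓ hℓ => Set.indicator_of_mem ((hmem ℓ).2 hℓ) _)
    _ = ((2 ^ t : ℕ) : ℝ≥0∞) := by
        rw [Finset.sum_const, hcard, nsmul_eq_mul, _root_.mul_one]
    _ = ENNReal.ofReal ((2:ℝ) ^ (-(-(t:ℤ)))) := by
        rw [hL, ← ENNReal.ofReal_natCast]
        congr 1

lemma DS_ne_top (I : ℤ × ℤ) : DS I ≠ ⊤ := by
  obtain ⟨j, n⟩ := I
  rcases le_or_gt 0 j with hj | hj
  · rw [DS_small hj]; split_ifs <;> simp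
  · rw [DS_big hj.le]; exact ENNReal.ofReal_ne_top

lemma muK_dint (k : ℕ) (I : ℤ × ℤ) :
    muK k (dint I) = DS I + ENNReal.ofReal ((2:ℝ) ^ (-(k:ℤ)) * (2:ℝ) ^ (-I.1)) := by
  rw [muK, Measure.add_apply, Measure.smul_apply, vol_restrict_compl, vol_dint, smul_eq_mul,
    ← ENNReal.ofReal_mul (by positivity)]
  rfl

lemma muK_dint_ne_top (k : ℕ) (I : ℤ × ℤ) : muK k (dint I) ≠ ⊤ := by
  rw [muK_dint]
  exact ENNReal.add_ne_top.2 ⟨DS_ne_top I, ENNReal.ofReal_ne_top⟩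

lemma muR_eq (k : ℕ) (I : ℤ × ℤ) :
    muR (muK k) I = (DS I).toReal + (2:ℝ) ^ (-(k:ℤ)) * (2:ℝ) ^ (-I.1) := by
  rw [muR, muK_dint, ENNReal.toReal_add (DS_ne_top I) ENNReal.ofReal_ne_top,
    ENNReal.toReal_ofReal (by positivity)]

lemma muR_pos (k : ℕ) (I : ℤ × ℤ) : 0 < muR (muK k) I := by
  rw [muR_eq]
  have h1 : (0:ℝ) ≤ (DS I).toReal := ENNReal.toReal_nonneg
  have h2 : (0:ℝ) < (2:ℝ) ^ (-(k:ℤ)) * (2:ℝ) ^ (-I.1) :=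
    mul_pos (two_zpow_pos _) (two_zpow_pos _)
  linarith

lemma bK_measurable (k : ℕ) : Measurable (bK k) := by
  have hset : {x : ℝ | ∃ n : ℤ, (n : ℝ) = x} = Set.range (fun n : ℤ => (n : ℝ)) := rfl
  exact Measurable.ite (hset ▸ (Set.countable_range _).measurableSet)
    measurable_const measurable_const

lemma one_le_bK (k : ℕ) (x : ℝ) : 1 ≤ bK k x := by
  rw [bK]
  split_ifs
  · exact le_refl 1
  · exact one_le_pow₀ (by norm_num)

lemma bK_le (k : ℕ) (x : ℝ) : bK k x ≤ 2 ^ k := by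
  rw [bK]
  split_ifs
  · exact one_le_pow₀ (by norm_num)
  · exact le_refl _

lemma bK_int (k : ℕ) (ℓ : ℤ) : bK k ((ℓ : ℤ) : ℝ) = 1 := if_pos ⟨ℓ, rfl⟩

lemma intOn_bK (k : ℕ) (I : ℤ × ℤ) : IntegrableOn (bK k) (dint I) (muK k) := by
  refine Measure.integrableOn_of_bounded (M := 2 ^ k) (muK_dint_ne_top k I)
    (bK_measurable k).aestronglyMeasurable (Filter.Eventually.of_forall fun x => ?_)
  rw [Real.norm_eq_abs, abs_of_nonneg (le_trans zero_le_one (one_le_bK k x))]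
  exact bK_le k x

lemma intOn_bK_sq (k : ℕ) (I : ℤ × ℤ) :
    IntegrableOn (fun x => bK k x ^ 2) (dint I) (muK k) := by
  refine Measure.integrableOn_of_bounded (M := (2 ^ k) ^ 2) (muK_dint_ne_top k I)
    (((bK_measurable k).pow_const 2).aestronglyMeasurable) (Filter.Eventually.of_forall fun x => ?_)
  rw [Real.norm_eq_abs, abs_of_nonneg (sq_nonneg _)]
  have h1 := one_le_bK k x
  have h2 := bK_le k x
  nlinarith

lemma eps_mul_pow (k : ℕ) : (2:ℝ) ^ (-(k:ℤ)) * 2 ^ k = 1 := by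
  rw [zpow_neg, zpow_natCast]
  exact inv_mul_cancel₀ (by positivity)

lemma setInt_bK (k : ℕ) (I : ℤ × ℤ) :
    ∫ x in dint I, bK k x ∂(muK k) = (DS I).toReal + (2:ℝ) ^ (-I.1) := by
  set S := dint I with hSdef
  have hS : MeasurableSet S := meas_dint I
  set M1 : Measure ℝ := Measure.sum (fun ℓ : ℤ => Measure.dirac ((ℓ : ℤ) : ℝ)) with hM1
  set M2 : Measure ℝ := ENNReal.ofReal ((2:ℝ) ^ (-(k:ℤ))) •
      volume.restrict ((Set.range (fun n : ℤ => (n : ℝ)))ᶜ) with hM2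
  have hsplit : (muK k).restrict S = M1.restrict S + M2.restrict S := by
    rw [show muK k = M1 + M2 from rfl, Measure.restrict_add]
  have hint : Integrable (bK k) ((muK k).restrict S) := intOn_bK k I
  rw [hsplit] at hint
  have h1 := (integrable_add_measure.1 hint).1
  have h2 := (integrable_add_measure.1 hint).2
  rw [show (∫ x in S, bK k x ∂(muK k)) = ∫ x, bK k x ∂((muK k).restrict S) from rfl, hsplit,
    integral_add_measure h1 h2]
  have hpart1 : ∫ x, bK k x ∂(M1.restrict S) = (DS I).toReal := by
    rw [hM1, Measure.restrict_sum_of_countable]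
    rw [integral_sum_measure (by rw [← Measure.restrict_sum_of_countable]; exact h1)]
    have hterm : ∀ ℓ : ℤ, ∫ x, bK k x ∂((Measure.dirac ((ℓ : ℤ) : ℝ)).restrict S)
        = ((dint I).indicator (1 : ℝ → ℝ≥0∞) ((ℓ : ℤ) : ℝ)).toReal := by
      intro ℓ
      rw [MeasureTheory.restrict_dirac' hS]
      by_cases hmem : ((ℓ : ℤ) : ℝ) ∈ S
      · rw [if_pos hmem, integral_dirac, bK_int, Set.indicator_of_mem hmem]; rfl
      · rw [if_neg hmem, Set.indicator_of_notMem hmem, integral_zero_measure]; rfl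
    rw [tsum_congr hterm, DS_eq, ENNReal.tsum_toReal_eq
      (fun ℓ => by by_cases h : ((ℓ : ℤ) : ℝ) ∈ dint I <;> simp [h])]
  have hpart2 : ∫ x, bK k x ∂(M2.restrict S) = (2:ℝ) ^ (-I.1) := by
    rw [hM2, Measure.restrict_smul, vol_restrict_compl, integral_smul_measure,
      ENNReal.toReal_ofReal (by positivity)]
    have hae : (fun x => bK k x) =ᵐ[volume.restrict S] (fun _ => (2:ℝ) ^ k) := by
      refine ae_restrict_of_ae ?_
      have : ∀ᵐ x ∂(volume : Measure ℝ), bK k x = (2:ℝ) ^ k := by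
        rw [ae_iff]
        refine measure_mono_null ?_ vol_Zs
        intro x hx
        simp only [Set.mem_setOf_eq] at hx
        by_contra hxr
        refine hx ?_
        rw [bK]
        exact if_neg (fun ⟨n, hn⟩ => hxr ⟨n, hn⟩)
      exact this
    rw [integral_congr_ae hae, setIntegral_const, hSdef, measureReal_def, vol_dint,
      ENNReal.toReal_ofReal (by positivity), smul_eq_mul]
    rw [smul_eq_mul, _root_.mul_comm ((2:ℝ) ^ (-I.1)) ((2:ℝ) ^ k), ← _root_.mul_assoc, eps_mul_pow, _root_.one_mul]
  rw [hpart1, hpart2]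

lemma avg_eq (k : ℕ) (I : ℤ × ℤ) :
    avg (muK k) I (bK k) = (muR (muK k) I)⁻¹ * ((DS I).toReal + (2:ℝ) ^ (-I.1)) := by
  rw [avg, setInt_bK]

lemma avg_nonneg' (k : ℕ) (I : ℤ × ℤ) : 0 ≤ avg (muK k) I (bK k) := by
  rw [avg_eq]
  have := (muR_pos k I).le
  have : (0:ℝ) < (2:ℝ) ^ (-I.1) := two_zpow_pos _
  have : (0:ℝ) ≤ (DS I).toReal := ENNReal.toReal_nonneg
  positivity

lemma avg_le_pow (k : ℕ) (I : ℤ × ℤ) : avg (muK k) I (bK k) ≤ 2 ^ k := by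
  rw [avg_eq, inv_mul_le_iff₀ (muR_pos k I), muR_eq]
  have hD : (0:ℝ) ≤ (DS I).toReal := ENNReal.toReal_nonneg
  have hpow : (1:ℝ) ≤ 2 ^ k := one_le_pow₀ (by norm_num)
  have key : (2:ℝ) ^ (-(k:ℤ)) * (2:ℝ) ^ (-I.1) * 2 ^ k = (2:ℝ) ^ (-I.1) := by
    rw [mul_right_comm, eps_mul_pow, _root_.one_mul]
  rw [_root_.add_mul, key]
  nlinarith [mul_nonneg hD (sub_nonneg.2 hpow)]

lemma PP_left (j n : ℤ) : PP (j + 1) (2 * n) ↔ PP j n := by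
  have h2 : (2:ℝ) ^ (-(j + 1)) * ((2 * n : ℤ) : ℝ) = (2:ℝ) ^ (-j) * n := by
    have : (2:ℝ) ^ (-(j + 1)) = (2:ℝ) ^ (-j) * (2:ℝ)⁻¹ := by
      rw [← zpow_neg_one, ← zpow_add₀ (by norm_num : (2:ℝ) ≠ 0)]
      congr 1
      ring
    rw [this]
    push_cast
    ring
  constructor
  · rintro ⟨ℓ, h⟩
    exact ⟨ℓ, by rw [h]; exact h2⟩
  · rintro ⟨ℓ, h⟩
    exact ⟨ℓ, by rw [h]; exact h2.symm⟩

lemma PP_right (j n : ℤ) (hj : 0 ≤ j) : ¬ PP (j + 1) (2 * n + 1) := by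
  rintro ⟨ℓ, h⟩
  lift j to ℕ using hj with t
  have hc : (0:ℝ) < (2:ℝ) ^ ((t:ℤ) + 1) := two_zpow_pos _
  have h' : (ℓ:ℝ) * (2:ℝ) ^ ((t:ℤ) + 1) = ((2 * n + 1 : ℤ) : ℝ) := by
    rw [h, zpow_neg]
    push_cast
    field_simp
  have hcast : (2:ℝ) ^ ((t:ℤ) + 1) = ((2 ^ (t + 1) : ℤ) : ℝ) := by
    rw [show ((t:ℤ) + 1) = ((t + 1 : ℕ) : ℤ) by push_cast; ring, zpow_natCast]
    push_cast
    ring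
  have heq : ℓ * 2 ^ (t + 1) = 2 * n + 1 := by
    exact_mod_cast (hcast ▸ h')
  have hdvd : (2:ℤ) ∣ 2 * n + 1 := ⟨ℓ * 2 ^ t, by rw [← heq]; ring⟩
  omega

lemma ch_false (j n : ℤ) : ch (j, n) false = (j + 1, 2 * n) := by simp [ch]
lemma ch_true (j n : ℤ) : ch (j, n) true = (j + 1, 2 * n + 1) := by simp [ch]

lemma muR_small (k : ℕ) {j n : ℤ} (hj : 0 ≤ j) :
    muR (muK k) (j, n) = (if PP j n then 1 else 0) + (2:ℝ) ^ (-(k:ℤ)) * (2:ℝ) ^ (-j) := by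
  rw [muR_eq, DS_small hj]
  split_ifs <;> simp

lemma muR_big (k : ℕ) {j n : ℤ} (hj : j ≤ 0) :
    muR (muK k) (j, n) = (2:ℝ) ^ (-j) + (2:ℝ) ^ (-(k:ℤ)) * (2:ℝ) ^ (-j) := by
  rw [muR_eq, DS_big hj, ENNReal.toReal_ofReal (two_zpow_pos _).le]

lemma half_zpow (j : ℤ) : (2:ℝ) ^ (-j) = 2 * (2:ℝ) ^ (-(j + 1)) := by
  rw [show (2:ℝ) ^ (-(j+1)) = (2:ℝ) ^ (-j) * (2:ℝ)⁻¹ by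
    rw [← zpow_neg_one, ← zpow_add₀ (by norm_num : (2:ℝ) ≠ 0)]; congr 1; ring]
  ring

lemma mQ_small (k : ℕ) {j n : ℤ} (hj : 0 ≤ j) :
    mQ (muK k) (j, n) =
      (((if PP j n then 1 else 0) + (2:ℝ) ^ (-(k:ℤ)) * (2:ℝ) ^ (-(j + 1))) *
          ((2:ℝ) ^ (-(k:ℤ)) * (2:ℝ) ^ (-(j + 1)))) /
        ((if PP j n then 1 else 0) + 2 * ((2:ℝ) ^ (-(k:ℤ)) * (2:ℝ) ^ (-(j + 1)))) := by
  rw [mQ, ch_false, ch_true, muR_small k (by omega : (0:ℤ) ≤ j + 1),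
    muR_small k (by omega : (0:ℤ) ≤ j + 1), muR_small k hj,
    if_neg (PP_right j n hj)]
  simp only [PP_left]
  rw [half_zpow j]
  ring_nf

lemma mQ_big_eq (k : ℕ) {j : ℤ} (hj : j ≤ -1) (n n' : ℤ) :
    mQ (muK k) (j, n) = mQ (muK k) (j, n') := by
  simp only [mQ, ch_false, ch_true, muR_big k (show j + 1 ≤ 0 by omega),
    muR_big k (show j ≤ 0 by omega)]

lemma mQ_nonneg (k : ℕ) (I : ℤ × ℤ) : 0 ≤ mQ (muK k) I := by
  rw [mQ]
  have h1 : (0:ℝ) ≤ muR (muK k) (ch I false) := ENNReal.toReal_nonneg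
  have h2 : (0:ℝ) ≤ muR (muK k) (ch I true) := ENNReal.toReal_nonneg
  have h3 : (0:ℝ) ≤ muR (muK k) I := ENNReal.toReal_nonneg
  positivity

lemma key_arith (s x y : ℝ) (hs : 0 < s) (hx : x = 0 ∨ x = 1) (hy : y = 0 ∨ y = 1) :
    ((x + s) * s) / (x + 2 * s) ≤ 4 * (((y + s) * s) / (y + 2 * s)) := by
  rcases hx with rfl | rfl <;> rcases hy with rfl | rfl <;>
    rw [mul_div_assoc', div_le_div_iff₀ (by nlinarith) (by nlinarith)] <;>
    nlinarith [mul_pos hs hs, mul_pos (mul_pos hs hs) hs]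

lemma sib_balanced (k : ℕ) : SibBalanced (muK k) 4 := by
  rintro ⟨j, n⟩
  have hsib : sib (j, n) = (j, if n % 2 = 0 then n + 1 else n - 1) := rfl
  rcases le_or_gt 0 j with hj | hj
  · rw [hsib, mQ_small k hj, mQ_small k hj]
    exact key_arith _ _ _ (mul_pos (two_zpow_pos _) (two_zpow_pos _))
      (by split_ifs <;> simp) (by split_ifs <;> simp)
  · rw [hsib, mQ_big_eq k (by omega) n (if n % 2 = 0 then n + 1 else n - 1)]
    nlinarith [mQ_nonneg k ((j : ℤ), if n % 2 = 0 then n + 1 else n - 1)]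

lemma avg_of_no_int (k : ℕ) (I : ℤ × ℤ) (hDS : DS I = 0) :
    avg (muK k) I (bK k) = 2 ^ k := by
  rw [avg_eq, muR_eq, hDS]
  simp only [ENNReal.toReal_zero, _root_.zero_add]
  rw [mul_inv, _root_.mul_assoc, inv_mul_cancel₀ (two_zpow_pos (-I.1)).ne', _root_.mul_one,
    zpow_neg, inv_inv, zpow_natCast]

lemma hhalf (k : ℕ) (hk : 1 ≤ k) : (2:ℝ) ^ (-(k:ℤ)) ≤ 1 / 2 := by
  rw [zpow_neg, zpow_natCast]
  have h2 : (2:ℝ) ≤ 2 ^ k := by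
    calc (2:ℝ) = 2 ^ 1 := (pow_one 2).symm
    _ ≤ 2 ^ k := pow_le_pow_right₀ (by norm_num) hk
  rw [one_div]
  exact inv_anti₀ (by norm_num) h2

lemma avg_lower (k : ℕ) (hk : 1 ≤ k) :
    (1/4 : ℝ) * 2 ^ k ≤
      |avg (muK k) ((k:ℤ), 0) (bK k) - avg (muK k) (sib ((k:ℤ), 0)) (bK k)| := by
  have hk0 : (0:ℤ) ≤ (k:ℤ) := by positivity
  have hsib0 : sib ((k:ℤ), 0) = ((k:ℤ), 1) := by norm_num [sib]
  have hPP1 : ¬ PP (k:ℤ) 1 := by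
    rintro ⟨ℓ, h⟩
    rw [Int.cast_one, _root_.mul_one] at h
    have h1 : (0:ℝ) < (ℓ:ℝ) := h ▸ two_zpow_pos _
    have h2 : (ℓ:ℝ) < 1 := by
      rw [h]; linarith [hhalf k hk]
    have h1' : (0:ℤ) < ℓ := by exact_mod_cast h1
    have h2' : ℓ < 1 := by exact_mod_cast h2
    omega
  have hDS1 : DS ((k:ℤ), 1) = 0 := by rw [DS_small hk0, if_neg hPP1]
  have havg1 : avg (muK k) ((k:ℤ), 1) (bK k) = 2 ^ k := avg_of_no_int k _ hDS1
  have hPP0 : PP (k:ℤ) 0 := ⟨0, by simp⟩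
  have hDS0 : ((DS ((k:ℤ), 0)).toReal) = 1 := by rw [DS_small hk0, if_pos hPP0]; simp
  have havg0 : avg (muK k) ((k:ℤ), 0) (bK k) ≤ 3 / 2 := by
    rw [avg_eq, inv_mul_le_iff₀ (muR_pos k _), muR_eq, hDS0]
    have hh := hhalf k hk
    have hp := two_zpow_pos (-(k:ℤ))
    nlinarith
  have havg0' : 0 ≤ avg (muK k) ((k:ℤ), 0) (bK k) := avg_nonneg' k _
  have h2k : (2:ℝ) ≤ 2 ^ k := by
    calc (2:ℝ) = 2 ^ 1 := (pow_one 2).symm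
    _ ≤ 2 ^ k := pow_le_pow_right₀ (by norm_num) hk
  rw [hsib0, havg1, abs_sub_comm]
  calc (1/4 : ℝ) * 2 ^ k ≤ 2 ^ k - 3 / 2 := by nlinarith
  _ ≤ 2 ^ k - avg (muK k) ((k:ℤ), 0) (bK k) := by linarith
  _ ≤ |2 ^ k - avg (muK k) ((k:ℤ), 0) (bK k)| := le_abs_self _

lemma osc_le (k : ℕ) (hk : 1 ≤ k) (I : ℤ × ℤ) :
    Real.sqrt ((muR (muK k) I)⁻¹ *
        ∫ x in dint I, (bK k x - avg (muK k) I (bK k)) ^ 2 ∂(muK k))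
      ≤ 4 * Real.sqrt ((2:ℝ) ^ k) := by
  by_cases hex : ∃ ℓ : ℤ, ((ℓ : ℤ) : ℝ) ∈ dint I
  case neg =>
    have hDS : DS I = 0 := by
      rw [DS_eq]
      have : ∀ ℓ : ℤ, (dint I).indicator (1 : ℝ → ℝ≥0∞) ((ℓ : ℤ) : ℝ) = 0 := fun ℓ =>
        Set.indicator_of_notMem (fun hm => hex ⟨ℓ, hm⟩) _
      simp [this]
    have ha : avg (muK k) I (bK k) = 2 ^ k := avg_of_no_int k I hDS
    have hzero : Set.EqOn (fun x => (bK k x - avg (muK k) I (bK k)) ^ 2)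
        (fun _ => (0:ℝ)) (dint I) := by
      intro x hx
      have hbx : bK k x = 2 ^ k := by
        rw [bK]
        exact if_neg (fun ⟨n, hn⟩ => hex ⟨n, hn ▸ hx⟩)
      simp [hbx, ha]
    rw [setIntegral_congr_fun (meas_dint I) hzero, integral_zero, mul_zero, Real.sqrt_zero]
    positivity
  case pos =>
    obtain ⟨ℓ, hℓ⟩ := hex
    obtain ⟨j, n⟩ := I
    set a := avg (muK k) ((j, n)) (bK k) with hadef
    set μr := muR (muK k) ((j, n)) with hmudef
    have hμr : 0 < μr := muR_pos k _
    have hpow : (0:ℝ) < 2 ^ k := by positivity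
    have hεpos := two_zpow_pos (-(k:ℤ))
    have hlpos := two_zpow_pos (-j)
    have hDr : (2:ℝ) ^ (-j) ≤ 2 * (DS (j, n)).toReal := by
      rcases le_or_gt 0 j with hj | hj
      · have hPP : PP j n := ⟨ℓ, (mem_small hj).1 hℓ⟩
        rw [DS_small hj, if_pos hPP]
        have : (2:ℝ) ^ (-j) ≤ 1 := by
          rw [zpow_neg]
          refine inv_le_one_of_one_le₀ ?_
          lift j to ℕ using hj
          rw [zpow_natCast]
          exact one_le_pow₀ (by norm_num)
        simp only [ENNReal.toReal_one]
        linarith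
      · rw [DS_big hj.le, ENNReal.toReal_ofReal hlpos.le]
        linarith
    have ha3 : a ≤ 3 := by
      rw [hadef, avg_eq, inv_mul_le_iff₀ (muR_pos k _), muR_eq]
      nlinarith [mul_nonneg hεpos.le hlpos.le, ENNReal.toReal_nonneg (a := DS (j, n))]
    have ha0 : 0 ≤ a := avg_nonneg' k _
    have hb : IntegrableOn (bK k) (dint (j, n)) (muK k) := intOn_bK k _
    have hb2 : IntegrableOn (fun x => bK k x ^ 2) (dint (j, n)) (muK k) := intOn_bK_sq k _
    have hab : IntegrableOn (fun x => 2 * a * bK k x) (dint (j, n)) (muK k) :=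
      hb.const_mul _
    have hconst : IntegrableOn (fun _ => a ^ 2) (dint (j, n)) (muK k) :=
      integrableOn_const (muK_dint_ne_top k _)
    have hIb : a * μr = ∫ x in dint (j, n), bK k x ∂(muK k) := by
      rw [hadef, hmudef,
        show avg (muK k) (j, n) (bK k)
          = (muR (muK k) (j, n))⁻¹ * ∫ x in dint (j, n), bK k x ∂(muK k) from rfl]
      field_simp
      exact mul_div_cancel_left₀ _ (muR_pos k _).ne'
    have hexp : ∫ x in dint (j, n), (bK k x - a) ^ 2 ∂(muK k)
        = (∫ x in dint (j, n), bK k x ^ 2 ∂(muK k)) - 2 * a * (a * μr) + a ^ 2 * μr := by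
      refine (integral_congr_ae (Filter.Eventually.of_forall
        (fun x => by ring : ∀ x, (bK k x - a) ^ 2
          = bK k x ^ 2 - 2 * a * bK k x + a ^ 2))).trans ?_
      have hsub : IntegrableOn (fun x => bK k x ^ 2 - 2 * a * bK k x) (dint (j, n)) (muK k) :=
        hb2.sub hab
      rw [integral_add hsub hconst, integral_sub hb2 hab, integral_const_mul,
        setIntegral_const, hIb]
      rw [smul_eq_mul]
      ring_nf
      rw [hmudef, muR, measureReal_def]
    have hsq : ∫ x in dint (j, n), bK k x ^ 2 ∂(muK k)
        ≤ 2 ^ k * ∫ x in dint (j, n), bK k x ∂(muK k) := by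
      rw [← integral_const_mul]
      refine setIntegral_mono hb2 (hb.const_mul _) (fun x => ?_)
      have h1 := one_le_bK k x
      have h2 := bK_le k x
      nlinarith
    have hE : ∫ x in dint (j, n), (bK k x - a) ^ 2 ∂(muK k) ≤ 2 ^ k * a * μr := by
      rw [hexp]
      nlinarith [sq_nonneg a, mul_nonneg (sq_nonneg a) hμr.le, hsq, hIb]
    have hfinal : μr⁻¹ * ∫ x in dint (j, n), (bK k x - a) ^ 2 ∂(muK k) ≤ 16 * 2 ^ k := by
      have step := mul_le_mul_of_nonneg_left hE (inv_nonneg.2 hμr.le)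
      have : μr⁻¹ * (2 ^ k * a * μr) = 2 ^ k * a := by field_simp
      rw [this] at step
      nlinarith
    calc Real.sqrt (μr⁻¹ * ∫ x in dint (j, n), (bK k x - a) ^ 2 ∂(muK k))
        ≤ Real.sqrt (16 * 2 ^ k) := Real.sqrt_le_sqrt hfinal
      _ = 4 * Real.sqrt ((2:ℝ) ^ k) := by
          rw [Real.sqrt_mul (by norm_num) _,
            show Real.sqrt 16 = 4 by
              rw [show (16:ℝ) = 4 ^ 2 by norm_num, Real.sqrt_sq (by norm_num : (0:ℝ) ≤ 4)]]

end Aux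

/-- Properties of the pairs `(μ_k, b_k)`: uniform sibling balancedness,
`sup_I |⟨b_k⟩_I − ⟨b_k⟩_{I^s}| ∼ 2^k`, and the `L²`-mean-oscillation bound `≲ 2^{k/2}`. -/
theorem stmt7 :
    ∃ c C : ℝ, 0 < c ∧ 0 < C ∧ ∀ k : ℕ, 1 ≤ k →
      SibBalanced (muK k) C ∧
      (∀ I : ℤ × ℤ, |avg (muK k) I (bK k) - avg (muK k) (sib I) (bK k)| ≤ C * (2:ℝ) ^ k) ∧
      (∃ I : ℤ × ℤ, c * (2:ℝ) ^ k ≤ |avg (muK k) I (bK k) - avg (muK k) (sib I) (bK k)|) ∧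
      (∀ I : ℤ × ℤ,
        Real.sqrt ((muR (muK k) I)⁻¹ *
            ∫ x in dint I, (bK k x - avg (muK k) I (bK k)) ^ 2 ∂(muK k))
          ≤ C * Real.sqrt ((2:ℝ) ^ k)) := by
  refine ⟨1/4, 4, by norm_num, by norm_num, fun k hk => ⟨sib_balanced k, ?_, ?_, osc_le k hk⟩⟩
  · intro I
    have h1 := avg_nonneg' k I
    have h2 := avg_le_pow k I
    have h3 := avg_nonneg' k (sib I)
    have h4 := avg_le_pow k (sib I)
    have hpow : (0:ℝ) < 2 ^ k := by positivity
    rw [abs_le]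
    constructor <;> linarith
  · exact ⟨((k:ℤ), 0), avg_lower k hk⟩

end Dyadic
end
end
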